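/- Inverse functional relation for lower characteristic (0,1): let α = Θ[0,0;0,1](0,0) and β = Θ[1,0;0,1](0,0). Then for all complex u, v, Θ[0,0;0,1](2u,2v) · (α² − β²) = θ[0,0;0,1](u,v) · θ[0,0;0,0](u,v) · α − θ[1,0;0,1](u,v) · θ[1,0;0,0](u,v) · β. -/

import Mathlib

open Complex

/-- Genus-two theta function with real characteristics `a c b d`
(upper characteristics `a, c`, lower characteristics `b, d`),
moduli `τ₁ τ₂ τ₁₂` and complex arguments `x y`. -/
noncomputable def theta (τ₁ τ₂ τ₁₂ : ℂ) (a c b d : ℝ) (x y : ℂ) : ℂ :=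
  ∑' p : ℤ × ℤ,
    Complex.exp
      ((Real.pi : ℂ) * Complex.I *
          (τ₁ * ((p.1 : ℂ) + (a : ℂ) / 2) ^ 2 + τ₂ * ((p.2 : ℂ) + (c : ℂ) / 2) ^ 2 +
            2 * τ₁₂ * ((p.1 : ℂ) + (a : ℂ) / 2) * ((p.2 : ℂ) + (c : ℂ) / 2)) +
        2 * (Real.pi : ℂ) * Complex.I *
          (((p.1 : ℂ) + (a : ℂ) / 2) * (x + (b : ℂ) / 2) +
            ((p.2 : ℂ) + (c : ℂ) / 2) * (y + (d : ℂ) / 2)))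

/-- The same theta function with doubled moduli `2τ₁, 2τ₂, 2τ₁₂`. -/
noncomputable def Theta2 (τ₁ τ₂ τ₁₂ : ℂ) (a c b d : ℝ) (x y : ℂ) : ℂ :=
  theta (2 * τ₁) (2 * τ₂) (2 * τ₁₂) a c b d x y

/-!
Writing a pair of lattice indices as `(m, m') = (k + k' + e, k - k')`, with `e ∈ {0,1}²` the parity
of `m + m'`, turns the product of two genus-two theta series into a sum over `e` of products of
theta series with doubled moduli (the addition formula `theta_mul_theta`). For
`θ[0,0;0,1]·θ[0,0;0,0]` and `θ[1,0;0,1]·θ[1,0;0,0]` at `(u, v)` the terms with upper characteristic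
`(·, 1)` vanish, since theta constants of odd characteristic are zero, leaving
`Θ[0,0;0,1](2u,2v) α + Θ[1,0;0,1](2u,2v) β` and `Θ[1,0;0,1](2u,2v) α + Θ[0,0;0,1](2u,2v) β`;
eliminating `Θ[1,0;0,1](2u,2v)` gives the relation.
-/

noncomputable def thetaTerm (τ₁ τ₂ τ₁₂ : ℂ) (a c b d : ℝ) (x y : ℂ) (p : ℤ × ℤ) : ℂ :=
  Complex.exp
    ((Real.pi : ℂ) * Complex.I *
        (τ₁ * ((p.1 : ℂ) + (a : ℂ) / 2) ^ 2 + τ₂ * ((p.2 : ℂ) + (c : ℂ) / 2) ^ 2 +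
          2 * τ₁₂ * ((p.1 : ℂ) + (a : ℂ) / 2) * ((p.2 : ℂ) + (c : ℂ) / 2)) +
      2 * (Real.pi : ℂ) * Complex.I *
        (((p.1 : ℂ) + (a : ℂ) / 2) * (x + (b : ℂ) / 2) +
          ((p.2 : ℂ) + (c : ℂ) / 2) * (y + (d : ℂ) / 2)))

lemma theta_eq_tsum_thetaTerm (τ₁ τ₂ τ₁₂ : ℂ) (a c b d : ℝ) (x y : ℂ) :
    theta τ₁ τ₂ τ₁₂ a c b d x y = ∑' p, thetaTerm τ₁ τ₂ τ₁₂ a c b d x y p := rfl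

lemma norm_thetaTerm (τ₁ τ₂ τ₁₂ : ℂ) (a c b d : ℝ) (x y : ℂ) (p : ℤ × ℤ) :
    ‖thetaTerm τ₁ τ₂ τ₁₂ a c b d x y p‖ =
      Real.exp (-Real.pi *
          (τ₁.im * (p.1 + a / 2) ^ 2 + τ₂.im * (p.2 + c / 2) ^ 2 +
            2 * τ₁₂.im * (p.1 + a / 2) * (p.2 + c / 2)) -
        2 * Real.pi * ((p.1 + a / 2) * x.im + (p.2 + c / 2) * y.im)) := by
  rw [thetaTerm, Complex.norm_exp]
  congr 1
  simp only [pow_two, add_re, mul_re, ofReal_re, I_re, mul_zero, ofReal_im, I_im, mul_one,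
    sub_self, intCast_re, div_ofNat_re, add_im, intCast_im, div_ofNat_im, zero_div, add_zero,
    sub_zero, mul_im, zero_mul, re_ofNat, im_ofNat, zero_add, zero_sub, neg_mul]
  ring

lemma exists_pos_mul_sq_add_sq_le {t₁ t₂ t₁₂ : ℝ} (h₁ : 0 < t₁) (h₂ : 0 < t₂)
    (h : t₁₂ ^ 2 < t₁ * t₂) :
    ∃ δ > 0, ∀ r₁ r₂ : ℝ,
      δ * (r₁ ^ 2 + r₂ ^ 2) ≤ t₁ * r₁ ^ 2 + t₂ * r₂ ^ 2 + 2 * t₁₂ * r₁ * r₂ := by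
  refine ⟨(t₁ * t₂ - t₁₂ ^ 2) / (t₁ + t₂), div_pos (by linarith) (by linarith), fun r₁ r₂ => ?_⟩
  rw [div_mul_eq_mul_div, div_le_iff₀ (by linarith)]
  nlinarith [sq_nonneg (t₁ * r₁ + t₁₂ * r₂), sq_nonneg (t₂ * r₂ + t₁₂ * r₁)]

lemma summable_exp_neg_mul_sq_add_mul (δ c e : ℝ) (hδ : 0 < δ) :
    Summable fun m : ℤ => Real.exp (-δ * (m + e) ^ 2 + c * (m + e)) := by
  -- a shifted real Gaussian is a constant multiple of `‖jacobiTheta₂_term m z τ‖`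
  set τ : ℂ := ⟨0, δ / Real.pi⟩
  set z : ℂ := ⟨0, (2 * δ * e - c) / (2 * Real.pi)⟩
  have hz : Summable fun m : ℤ => ‖jacobiTheta₂_term m z τ‖ :=
    ((summable_jacobiTheta₂_term_iff z τ).mpr (by simpa [τ] using div_pos hδ Real.pi_pos)).norm
  refine (hz.mul_left (Real.exp (-δ * e ^ 2 + c * e))).congr fun m => ?_
  rw [norm_jacobiTheta₂_term, ← Real.exp_add]
  congr 1
  simp only [τ, z]
  field_simp
  ring

lemma summable_norm_thetaTerm {τ₁ τ₂ τ₁₂ : ℂ} (hτ₁ : 0 < τ₁.im) (hτ₂ : 0 < τ₂.im)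
    (hτ : τ₁₂.im ^ 2 < τ₁.im * τ₂.im) (a c b d : ℝ) (x y : ℂ) :
    Summable fun p : ℤ × ℤ => ‖thetaTerm τ₁ τ₂ τ₁₂ a c b d x y p‖ := by
  obtain ⟨δ, hδ, hQ⟩ := exists_pos_mul_sq_add_sq_le hτ₁ hτ₂ hτ
  have hπδ : 0 < Real.pi * δ := mul_pos Real.pi_pos hδ
  have hg := (summable_exp_neg_mul_sq_add_mul _ (-(2 * Real.pi * x.im)) (a / 2) hπδ).mul_of_nonneg
    (summable_exp_neg_mul_sq_add_mul _ (-(2 * Real.pi * y.im)) (c / 2) hπδ)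
    (fun _ => (Real.exp_pos _).le) (fun _ => (Real.exp_pos _).le)
  refine .of_nonneg_of_le (fun _ => norm_nonneg _) (fun p => ?_) hg
  rw [norm_thetaTerm, ← Real.exp_add, Real.exp_le_exp]
  nlinarith [mul_le_mul_of_nonneg_left (hQ (p.1 + a / 2) (p.2 + c / 2)) Real.pi_pos.le]

def addSubParityEquiv : Bool × ℤ × ℤ ≃ ℤ × ℤ where
  toFun w := (w.2.1 + w.2.2 + w.1.toNat, w.2.1 - w.2.2)
  invFun z := (decide ((z.1 + z.2) % 2 = 1), (z.1 + z.2) / 2, (z.1 - z.2) / 2)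
  left_inv := by
    rintro ⟨_ | _, k, k'⟩ <;> simp only [Prod.mk.injEq, decide_eq_true_eq, decide_eq_false_iff_not,
      Bool.toNat_false, Bool.toNat_true] <;> omega
  right_inv := by
    rintro ⟨m, m'⟩
    by_cases h : (m + m') % 2 = 1 <;>
      simp only [h, decide_true, decide_false, Bool.toNat_true, Bool.toNat_false, Nat.cast_one,
        Nat.cast_zero, add_zero, Prod.mk.injEq] <;> omega

-- `((e₁, e₂), (k₁, k₂), (k₁', k₂')) ↦ ((k₁ + k₁' + e₁, k₂ + k₂' + e₂), (k₁ - k₁', k₂ - k₂'))`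
def addSubParityEquiv₂ : (Bool × Bool) × (ℤ × ℤ) × (ℤ × ℤ) ≃ (ℤ × ℤ) × (ℤ × ℤ) :=
  ((Equiv.refl _).prodCongr (Equiv.prodProdProdComm ℤ ℤ ℤ ℤ)).trans <|
    (Equiv.prodProdProdComm _ _ _ _).trans <|
      (addSubParityEquiv.prodCongr addSubParityEquiv).trans (Equiv.prodProdProdComm _ _ _ _)

lemma thetaTerm_mul_thetaTerm (τ₁ τ₂ τ₁₂ : ℂ) (a c b d a' c' b' d' : ℝ) (x y x' y' : ℂ)
    (e₁ e₂ : ℕ) (k₁ k₂ k₁' k₂' : ℤ) :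
    thetaTerm τ₁ τ₂ τ₁₂ a c b d x y (k₁ + k₁' + e₁, k₂ + k₂' + e₂) *
        thetaTerm τ₁ τ₂ τ₁₂ a' c' b' d' x' y' (k₁ - k₁', k₂ - k₂') =
      thetaTerm (2 * τ₁) (2 * τ₂) (2 * τ₁₂) (e₁ + (a + a') / 2) (e₂ + (c + c') / 2)
          (b + b') (d + d') (x + x') (y + y') (k₁, k₂) *
        thetaTerm (2 * τ₁) (2 * τ₂) (2 * τ₁₂) (e₁ + (a - a') / 2) (e₂ + (c - c') / 2)
          (b - b') (d - d') (x - x') (y - y') (k₁', k₂') := by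
  simp only [thetaTerm, ← Complex.exp_add]
  congr 1
  push_cast
  ring

theorem theta_mul_theta {τ₁ τ₂ τ₁₂ : ℂ} (hτ₁ : 0 < τ₁.im) (hτ₂ : 0 < τ₂.im)
    (hτ : τ₁₂.im ^ 2 < τ₁.im * τ₂.im) (a c b d a' c' b' d' : ℝ) (x y x' y' : ℂ) :
    theta τ₁ τ₂ τ₁₂ a c b d x y * theta τ₁ τ₂ τ₁₂ a' c' b' d' x' y' =
      ∑ e : Bool × Bool,
        theta (2 * τ₁) (2 * τ₂) (2 * τ₁₂) (e.1.toNat + (a + a') / 2) (e.2.toNat + (c + c') / 2)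
            (b + b') (d + d') (x + x') (y + y') *
          theta (2 * τ₁) (2 * τ₂) (2 * τ₁₂) (e.1.toNat + (a - a') / 2) (e.2.toNat + (c - c') / 2)
            (b - b') (d - d') (x - x') (y - y') := by
  have h2τ₁ : 0 < (2 * τ₁).im := by simpa using hτ₁
  have h2τ₂ : 0 < (2 * τ₂).im := by simpa using hτ₂
  have h2τ : (2 * τ₁₂).im ^ 2 < (2 * τ₁).im * (2 * τ₂).im := by
    simp only [mul_im, re_ofNat, im_ofNat, zero_mul, add_zero]; nlinarith
  have hs := summable_norm_thetaTerm hτ₁ hτ₂ hτ a c b d x y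
  have hs' := summable_norm_thetaTerm hτ₁ hτ₂ hτ a' c' b' d' x' y'
  set F : (ℤ × ℤ) × (ℤ × ℤ) → ℂ := fun z =>
    thetaTerm τ₁ τ₂ τ₁₂ a c b d x y z.1 * thetaTerm τ₁ τ₂ τ₁₂ a' c' b' d' x' y' z.2
  have hF : Summable fun w => F (addSubParityEquiv₂ w) :=
    addSubParityEquiv₂.summable_iff.mpr (summable_mul_of_summable_norm hs hs')
  calc _ = ∑' z, F z := tsum_mul_tsum_of_summable_norm hs hs'
    _ = ∑' w, F (addSubParityEquiv₂ w) := (addSubParityEquiv₂.tsum_eq F).symm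
    _ = ∑ e, ∑' k, F (addSubParityEquiv₂ (e, k)) :=
      hF.tsum_prod.trans (tsum_fintype _)
    _ = _ := Finset.sum_congr rfl fun e _ => by
      rw [theta_eq_tsum_thetaTerm, theta_eq_tsum_thetaTerm, tsum_mul_tsum_of_summable_norm
        (summable_norm_thetaTerm h2τ₁ h2τ₂ h2τ ..) (summable_norm_thetaTerm h2τ₁ h2τ₂ h2τ ..)]
      exact tsum_congr fun k => thetaTerm_mul_thetaTerm ..

lemma thetaTerm_neg_sub (τ₁ τ₂ τ₁₂ : ℂ) (a c b d : ℤ) (x y : ℂ) (p : ℤ × ℤ) :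
    thetaTerm τ₁ τ₂ τ₁₂ a c b d (-x) (-y) (-p - (a, c)) =
      (-1) ^ (a * b + c * d) * thetaTerm τ₁ τ₂ τ₁₂ a c b d x y p := by
  -- reflecting `p + (a, c) / 2` changes the exponent by `πi (ab + cd) + 2πi N` with `N ∈ ℤ`
  have hN : ∃ N : ℤ, thetaTerm τ₁ τ₂ τ₁₂ a c b d (-x) (-y) (-p - (a, c)) =
      Complex.exp ((a * b + c * d : ℤ) * (Real.pi * Complex.I) + N * (2 * Real.pi * Complex.I)) *
        thetaTerm τ₁ τ₂ τ₁₂ a c b d x y p := by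
    refine ⟨-(p.1 * b + p.2 * d) - (a * b + c * d), ?_⟩
    simp only [thetaTerm, ← Complex.exp_add]
    congr 1
    simp only [Prod.fst_sub, Prod.snd_sub, Prod.fst_neg, Prod.snd_neg]
    push_cast
    ring
  obtain ⟨N, hN⟩ := hN
  rw [hN, Complex.exp_add, Complex.exp_int_mul, Complex.exp_pi_mul_I,
    Complex.exp_int_mul_two_pi_mul_I, mul_one]

lemma theta_neg (τ₁ τ₂ τ₁₂ : ℂ) (a c b d : ℤ) (x y : ℂ) :
    theta τ₁ τ₂ τ₁₂ a c b d (-x) (-y) = (-1) ^ (a * b + c * d) * theta τ₁ τ₂ τ₁₂ a c b d x y := by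
  rw [theta_eq_tsum_thetaTerm, ← ((Equiv.neg _).trans (Equiv.subRight (a, c))).tsum_eq,
    theta_eq_tsum_thetaTerm, ← tsum_mul_left]
  exact tsum_congr (thetaTerm_neg_sub τ₁ τ₂ τ₁₂ a c b d x y)

lemma theta_zero_zero_of_odd (τ₁ τ₂ τ₁₂ : ℂ) {a c b d : ℤ} (h : Odd (a * b + c * d)) :
    theta τ₁ τ₂ τ₁₂ a c b d 0 0 = 0 := by
  have := theta_neg τ₁ τ₂ τ₁₂ a c b d 0 0
  rw [neg_zero, h.neg_one_zpow] at this
  linear_combination this / 2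

lemma theta_add_two_left (τ₁ τ₂ τ₁₂ : ℂ) (a c b d : ℝ) (x y : ℂ) :
    theta τ₁ τ₂ τ₁₂ (a + 2) c b d x y = theta τ₁ τ₂ τ₁₂ a c b d x y := by
  rw [theta_eq_tsum_thetaTerm, theta_eq_tsum_thetaTerm,
    ← (Equiv.addRight ((1, 0) : ℤ × ℤ)).tsum_eq (thetaTerm τ₁ τ₂ τ₁₂ a c b d x y)]
  refine tsum_congr fun p => ?_
  simp only [thetaTerm, Equiv.coe_addRight, Prod.fst_add, Prod.snd_add]
  congr 1
  push_cast
  ring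

theorem inverse_functional_relation_01 (τ₁ τ₂ τ₁₂ : ℂ)
    (hτ₁ : 0 < τ₁.im) (hτ₂ : 0 < τ₂.im) (hτ : τ₁₂.im ^ 2 < τ₁.im * τ₂.im)
    (u v : ℂ) :
    Theta2 τ₁ τ₂ τ₁₂ 0 0 0 1 (2 * u) (2 * v) *
        (Theta2 τ₁ τ₂ τ₁₂ 0 0 0 1 0 0 ^ 2 - Theta2 τ₁ τ₂ τ₁₂ 1 0 0 1 0 0 ^ 2) =
      theta τ₁ τ₂ τ₁₂ 0 0 0 1 u v * theta τ₁ τ₂ τ₁₂ 0 0 0 0 u v *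
          Theta2 τ₁ τ₂ τ₁₂ 0 0 0 1 0 0 -
        theta τ₁ τ₂ τ₁₂ 1 0 0 1 u v * theta τ₁ τ₂ τ₁₂ 1 0 0 0 u v *
          Theta2 τ₁ τ₂ τ₁₂ 1 0 0 1 0 0 := by
  have hodd₀ : theta (2 * τ₁) (2 * τ₂) (2 * τ₁₂) 0 1 0 1 0 0 = 0 := by
    simpa using theta_zero_zero_of_odd (2 * τ₁) (2 * τ₂) (2 * τ₁₂) (a := 0) (c := 1) (b := 0)
      (d := 1) odd_one
  have hodd₁ : theta (2 * τ₁) (2 * τ₂) (2 * τ₁₂) 1 1 0 1 0 0 = 0 := by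
    simpa using theta_zero_zero_of_odd (2 * τ₁) (2 * τ₂) (2 * τ₁₂) (a := 1) (c := 1) (b := 0)
      (d := 1) odd_one
  have hper : theta (2 * τ₁) (2 * τ₂) (2 * τ₁₂) 2 0 0 1 (2 * u) (2 * v) =
      theta (2 * τ₁) (2 * τ₂) (2 * τ₁₂) 0 0 0 1 (2 * u) (2 * v) := by
    simpa using theta_add_two_left (2 * τ₁) (2 * τ₂) (2 * τ₁₂) 0 0 0 1 (2 * u) (2 * v)
  have hprod₀ := theta_mul_theta hτ₁ hτ₂ hτ 0 0 0 1 0 0 0 0 u v u v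
  have hprod₁ := theta_mul_theta hτ₁ hτ₂ hτ 1 0 0 1 1 0 0 0 u v u v
  norm_num [Fintype.sum_prod_type, ← two_mul] at hprod₀ hprod₁
  rw [Theta2, Theta2, Theta2, hprod₀, hprod₁, hodd₀, hodd₁, hper]
  ring
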